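/- arXiv:0909.3344 — 6 statements merged into one kernel-verified Lean document; each statement's English description precedes it below -/
import Mathlib

section
/- For a finite point set X in the plane and a point x in X, and any k ≥ 1, there are at most 8k points z ∈ X \ {x} such that x is among the k nearest neighbors of z in X \ {z} (i.e., at most k points of X \ {z} are strictly closer to z than x is, using Euclidean distance, with ties broken consistently). More precisely: within any cone with apex x and central angle π/4, at most k points of X can have x among their k nearest neighbors, and 8 such cones cover the plane. -/
/-!
Split the plane around `x` into eight sectors of angle `π / 4`, and let `z` be the point of a
sector farthest from `x`. For any other point `w` of the sector the angle at `x` is below `π / 3`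
and `‖w - x‖ ≤ ‖z - x‖, so the law of cosines gives `dist w z < dist x z`. If `x` is among the
`k` nearest neighbours of `z`, there are at most `k - 1` such `w`, so each sector contributes at
most `k` points.
-/

open Finset Real InnerProductGeometry

theorem InnerProductGeometry.norm_sub_lt_of_angle_lt_pi_div_three {V : Type*}
    [NormedAddCommGroup V] [InnerProductSpace ℝ V] {u v : V} (hu : u ≠ 0) (huv : ‖u‖ ≤ ‖v‖)
    (hangle : angle u v < π / 3) : ‖u - v‖ < ‖v‖ := by
  have hcos : 1 / 2 < cos (angle u v) := by
    rw [← cos_pi_div_three]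
    exact cos_lt_cos_of_nonneg_of_le_pi (angle_nonneg u v) (by linarith [pi_pos]) hangle
  have hu0 : 0 < ‖u‖ := norm_pos_iff.mpr hu
  have huv0 : 0 < ‖u‖ * ‖v‖ := mul_pos hu0 (hu0.trans_le huv)
  refine lt_of_mul_self_lt_mul_self₀ (norm_nonneg v) ?_
  rw [norm_sub_sq_eq_norm_sq_add_norm_sq_sub_two_mul_norm_mul_norm_mul_cos_angle]
  nlinarith [mul_lt_mul_of_pos_left hcos huv0, mul_le_mul_of_nonneg_left huv hu0.le]

theorem Int.abs_sub_lt_one_of_ceil_eq_ceil {R : Type*} [Ring R] [LinearOrder R]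
    [IsStrictOrderedRing R] [FloorRing R] {a b : R} (h : ⌈a⌉ = ⌈b⌉) : |a - b| < 1 := by
  have := Int.abs_sub_lt_one_of_floor_eq_floor (a := -a) (b := -b)
    (by rw [Int.floor_neg, Int.floor_neg, h])
  rwa [neg_sub_neg, abs_sub_comm] at this

theorem Complex.angle_eq_abs_arg_sub {x y : ℂ} (hx : x ≠ 0) (hy : y ≠ 0)
    (h : |arg x - arg y| < π) : angle x y = |arg x - arg y| := by
  rw [angle_eq_abs_arg hx hy, ← arg_coe_angle_toReal_eq_arg, arg_div_coe_angle hx hy,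
    ← Real.Angle.coe_sub, Real.Angle.toReal_coe_eq_self_iff.2]
  constructor <;> linarith [abs_lt.1 h]

/-- The sector `((n - 1) π / 4, n π / 4]` containing `arg v` has index `n`; since
`arg v ∈ (-π, π]`, the ceiling (unlike the floor) takes exactly eight values. -/
noncomputable def coneIndex (v : ℂ) : ℤ := ⌈Complex.arg v / (π / 4)⌉

theorem coneIndex_mem_Icc (v : ℂ) : coneIndex v ∈ Icc (-3 : ℤ) 4 := by
  have hlo := Complex.neg_pi_lt_arg v
  have hhi := Complex.arg_le_pi v
  rw [mem_Icc, coneIndex, Int.le_ceil_iff, Int.ceil_le, lt_div_iff₀ (by positivity),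
    div_le_iff₀ (by positivity)]
  push_cast
  constructor <;> linarith

theorem abs_arg_sub_lt_of_coneIndex_eq {u v : ℂ} (h : coneIndex u = coneIndex v) :
    |Complex.arg u - Complex.arg v| < π / 4 := by
  have hpi : 0 < π / 4 := by positivity
  have := Int.abs_sub_lt_one_of_ceil_eq_ceil h
  rwa [← sub_div, abs_div, abs_of_pos hpi, div_lt_one hpi] at this

theorem dist_lt_of_coneIndex_eq {x w z : ℂ} (hw : w ≠ x)
    (hcone : coneIndex (w - x) = coneIndex (z - x)) (hwz : dist w x ≤ dist z x) :
    dist w z < dist x z := by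
  have hu : w - x ≠ 0 := sub_ne_zero.2 hw
  have hle : ‖w - x‖ ≤ ‖z - x‖ := by simpa only [dist_eq_norm] using hwz
  have hv : z - x ≠ 0 := norm_pos_iff.1 ((norm_pos_iff.2 hu).trans_le hle)
  have harg := abs_arg_sub_lt_of_coneIndex_eq hcone
  have hangle : angle (w - x) (z - x) < π / 3 := by
    rw [Complex.angle_eq_abs_arg_sub hu hv (by linarith [pi_pos])]
    linarith [pi_pos]
  have := norm_sub_lt_of_angle_lt_pi_div_three hu hle hangle
  rwa [sub_sub_sub_cancel_right, ← dist_eq_norm, ← dist_eq_norm, dist_comm z] at this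

theorem card_le_of_forall_dist_lt_dist {α : Type*} [PseudoMetricSpace α] [DecidableEq α]
    {X T : Finset α} {x : α} {k : ℕ} (hk : 1 ≤ k) (hTX : T ⊆ X)
    (hnear : ∀ z ∈ T, #{w ∈ X.erase z | dist w z < dist x z} ≤ k - 1)
    (hcone : ∀ w ∈ T, ∀ z ∈ T, w ≠ z → dist w x ≤ dist z x → dist w z < dist x z) :
    #T ≤ k := by
  rcases T.eq_empty_or_nonempty with rfl | hT
  · simp
  obtain ⟨z, hzT, hzmax⟩ := T.exists_max_image (dist · x) hT
  have hsub : T.erase z ⊆ {w ∈ X.erase z | dist w z < dist x z} := fun w hw => by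
    obtain ⟨hwz, hwT⟩ := mem_erase.1 hw
    exact mem_filter.2 ⟨mem_erase.2 ⟨hwz, hTX hwT⟩, hcone w hwT z hzT hwz (hzmax w hwT)⟩
  have := (card_le_card hsub).trans (hnear z hzT)
  rw [card_erase_of_mem hzT] at this
  omega

theorem nearest_neighbor_bound_general (X : Finset ℂ) (x : ℂ) (k : ℕ) (hk : 1 ≤ k) :
    ((X.erase x).filter (fun z =>
        ((X.erase z).filter (fun w => dist w z < dist x z)).card ≤ k - 1)).card ≤ 8 * k := by
  set S := (X.erase x).filter fun z => #{w ∈ X.erase z | dist w z < dist x z} ≤ k - 1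
  have hcone : ∀ m ∈ S.image (coneIndex <| · - x), #{z ∈ S | coneIndex (z - x) = m} ≤ k := by
    intro m _
    refine card_le_of_forall_dist_lt_dist hk (filter_subset _ _ |>.trans <| filter_subset _ _
      |>.trans <| erase_subset x X) (fun z hz => (mem_filter.1 (mem_filter.1 hz).1).2) ?_
    intro w hw z hz _ hwz
    rw [mem_filter] at hw hz
    exact dist_lt_of_coneIndex_eq (mem_erase.1 (mem_filter.1 hw.1).1).1 (hw.2.trans hz.2.symm) hwz
  calc #S ≤ k * #(S.image (coneIndex <| · - x)) := card_le_mul_card_image S k hcone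
    _ ≤ k * #(Icc (-3 : ℤ) 4) := by
      gcongr
      exact image_subset_iff.2 fun z _ => coneIndex_mem_Icc _
    _ = 8 * k := by rw [Int.card_Icc, mul_comm]; rfl

/-- For a finite point set `X` in the plane (modeled as `ℂ` with the
Euclidean distance), a point `x ∈ X` and `k ≥ 1`, there are at most `8k` points
`z ∈ X \ {x}` such that `x` is among the `k` nearest neighbors of `z` in `X \ {z}`,
i.e. at most `k - 1` points of `X \ {z}` are strictly closer to `z` than `x` is. -/
theorem nearest_neighbor_bound (X : Finset ℂ) (x : ℂ) (hx : x ∈ X) (k : ℕ) (hk : 1 ≤ k) :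
    ((X.erase x).filter (fun z =>
        ((X.erase z).filter (fun w => dist w z < dist x z)).card ≤ k - 1)).card ≤ 8 * k :=
  nearest_neighbor_bound_general X x k hk
end

section
/- Let (j_n) be a sequence of positive integers with j_n → ∞ and j_n/n → 0, let t ∈ ℝ, and let p_n ∈ (0,1) satisfy (j_n − n p_n)/√(n p_n) → t. Then √(j_n) · β_{n,p_n}(j_n) → φ(t), where φ is the standard normal density. -/
open Filter Real

/-- The binomial probability `β_{n,p}(k) = C(n,k) p^k (1-p)^(n-k)`. -/
noncomputable def binomProb (n : ℕ) (p : ℝ) (k : ℕ) : ℝ :=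
  (n.choose k : ℝ) * p ^ k * (1 - p) ^ (n - k)

/-!
Write `n!`, `k!` and `(n-k)!` with Stirling's formula `m! = s_m √(2m) (m/e)^m`. Then
`√k · β_{n,p}(k)` is the product of `s_n / (s_k s_{n-k}) → 1/√π`, of `√(n / (2(n-k))) → 1/√2`
and of `exp (-D)`, where `D = k log (k/np) + (n-k) log ((n-k)/(n-np))`. Expanding
`(1+u) log (1+u) = u + u²/2 + O(u³)` in both terms of `D`, the linear parts cancel and the
quadratic parts are `(k-np)²/(2np) → t²/2` and `(k-np)²/(2(n-np)) → 0`, because `np → ∞` and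
`p → 0`; each cubic remainder is `O(|k-np|³/(np)²) = o(1)`.
-/

open Topology Stirling
open scoped Nat

lemma abs_one_add_mul_log_one_add_sub_le {u : ℝ} (hu : |u| ≤ 1 / 2) :
    |(1 + u) * log (1 + u) - u - u ^ 2 / 2| ≤ 4 * |u| ^ 3 := by
  have hlog := abs_log_sub_add_sum_range_le (x := -u) (by rw [abs_neg]; linarith) 2
  norm_num [Finset.sum_range_succ] at hlog
  have he : |log (1 + u) - u + u ^ 2 / 2| ≤ 2 * |u| ^ 3 := by
    calc |log (1 + u) - u + u ^ 2 / 2| = |-u + u ^ 2 / 2 + log (1 + u)| := by ring_nf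
      _ ≤ |u| ^ 3 / (1 - |u|) := hlog
      _ ≤ 2 * |u| ^ 3 := by
        rw [div_le_iff₀ (by linarith)]; nlinarith [pow_nonneg (abs_nonneg u) 3]
  have h1u : |1 + u| ≤ 3 / 2 := (abs_add_le _ _).trans (by norm_num; linarith)
  calc |(1 + u) * log (1 + u) - u - u ^ 2 / 2|
      = |(1 + u) * (log (1 + u) - u + u ^ 2 / 2) - u ^ 3 / 2| := by ring_nf
    _ ≤ |1 + u| * |log (1 + u) - u + u ^ 2 / 2| + |u| ^ 3 / 2 := by
      refine (abs_sub _ _).trans ?_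
      rw [abs_mul, abs_div, abs_pow, abs_two]
    _ ≤ 3 / 2 * (2 * |u| ^ 3) + |u| ^ 3 / 2 := by gcongr
    _ ≤ 4 * |u| ^ 3 := by nlinarith [pow_nonneg (abs_nonneg u) 3]

section NormalizedDeviation

variable {α : Type*} {l : Filter α} {a b c : α → ℝ} {s : ℝ}

lemma tendsto_atTop_of_tendsto_sub_div_sqrt (ha : Tendsto a l atTop) (hb : ∀ᶠ i in l, 0 < b i)
    (hs : Tendsto (fun i => (a i - b i) / √(b i)) l (𝓝 s)) : Tendsto b l atTop := by
  obtain ⟨C, hC0, hC⟩ : ∃ C, 0 < C ∧ ∀ᶠ i in l, (a i - b i) / √(b i) ≤ C :=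
    ⟨|s| + 1, by positivity, hs.eventually (gt_mem_nhds (by linarith [le_abs_self s]))
      |>.mono fun _ h => h.le⟩
  refine tendsto_atTop_mono' l ?_ ((tendsto_atTop_add_const_right l (-C) ha).atTop_div_const
    (by positivity : 0 < 1 + C))
  filter_upwards [hb, hC] with i hbi hCi
  have hsq := sq_sqrt hbi.le
  rw [div_le_iff₀ (sqrt_pos.2 hbi)] at hCi
  rw [div_le_iff₀ (by positivity)]
  nlinarith [sq_nonneg (√(b i) - 1)]

lemma tendsto_div_of_tendsto_sub_div_sqrt (hb : Tendsto b l atTop)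
    (hs : Tendsto (fun i => (a i - b i) / √(b i)) l (𝓝 s)) :
    Tendsto (fun i => a i / b i) l (𝓝 1) := by
  have h := (hs.mul (tendsto_inv_atTop_zero.comp (tendsto_sqrt_atTop.comp hb))).const_add 1
  rw [mul_zero, add_zero] at h
  refine h.congr' ?_
  filter_upwards [hb.eventually_gt_atTop 0] with i hbi
  have := sqrt_pos.2 hbi
  simp only [Function.comp_apply]
  field_simp
  rw [sq_sqrt hbi.le]
  ring

lemma tendsto_div_zero_of_tendsto_sub_div_sqrt (hb : Tendsto b l atTop)
    (hs : Tendsto (fun i => (a i - b i) / √(b i)) l (𝓝 s))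
    (hac : Tendsto (fun i => a i / c i) l (𝓝 0)) : Tendsto (fun i => b i / c i) l (𝓝 0) := by
  have hab := tendsto_div_of_tendsto_sub_div_sqrt hb hs
  have h := (hab.inv₀ one_ne_zero).mul hac
  rw [inv_one, one_mul] at h
  refine h.congr' ?_
  filter_upwards [hab.eventually_ne one_ne_zero] with i hi
  rw [inv_div, div_mul_div_cancel₀ (div_ne_zero_iff.1 hi).1]

lemma tendsto_sub_div_sqrt_of_tendsto_div (hb : ∀ᶠ i in l, 0 < b i)
    (hs : Tendsto (fun i => (a i - b i) / √(b i)) l (𝓝 s))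
    (hbc : Tendsto (fun i => b i / c i) l (𝓝 0)) :
    Tendsto (fun i => (a i - b i) / √(c i)) l (𝓝 0) := by
  have h := hs.mul hbc.sqrt
  rw [sqrt_zero, mul_zero] at h
  refine h.congr' ?_
  filter_upwards [hb] with i hbi
  rw [sqrt_div hbi.le, div_mul_div_cancel₀ (sqrt_pos.2 hbi).ne']

lemma tendsto_mul_log_div_sub (hb : Tendsto b l atTop)
    (hs : Tendsto (fun i => (a i - b i) / √(b i)) l (𝓝 s)) :
    Tendsto (fun i => a i * log (a i / b i) - (a i - b i)) l (𝓝 (s ^ 2 / 2)) := by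
  -- With `u = a/b - 1` the expression is `b u²/2 + b O(u³)`, and `b u² = ((a - b)/√b)²`.
  set u := fun i => a i / b i - 1 with hu_def
  have hu : Tendsto u l (𝓝 0) := by
    simpa [u] using (tendsto_div_of_tendsto_sub_div_sqrt hb hs).sub_const 1
  have hsq : ∀ᶠ i in l, ((a i - b i) / √(b i)) ^ 2 = b i * u i ^ 2 := by
    filter_upwards [hb.eventually_gt_atTop 0] with i hbi
    rw [div_pow, sq_sqrt hbi.le, hu_def]
    field_simp
  have hF : Tendsto (fun i => b i * ((1 + u i) * log (1 + u i) - u i - u i ^ 2 / 2)) l (𝓝 0) := by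
    refine squeeze_zero_norm' ?_ (by simpa using ((hs.pow 2).mul hu.abs).const_mul 4)
    filter_upwards [hb.eventually_gt_atTop 0, hsq,
      hu.eventually (Metric.closedBall_mem_nhds 0 (by norm_num : (0:ℝ) < 1 / 2))]
      with i hbi hsqi hui
    rw [dist_zero_right, norm_eq_abs] at hui
    rw [norm_mul, norm_of_nonneg hbi.le, norm_eq_abs, hsqi]
    calc b i * |(1 + u i) * log (1 + u i) - u i - u i ^ 2 / 2| ≤ b i * (4 * |u i| ^ 3) := by
          gcongr; exact abs_one_add_mul_log_one_add_sub_le hui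
      _ = 4 * (b i * u i ^ 2 * |u i|) := by rw [← sq_abs (u i)]; ring
  have h := ((hs.pow 2).div_const 2).add hF
  rw [add_zero] at h
  refine h.congr' ?_
  filter_upwards [hb.eventually_gt_atTop 0, hsq] with i hbi hsqi
  rw [hsqi, show 1 + u i = a i / b i by simp [u]]
  simp only [u]
  field_simp
  ring

end NormalizedDeviation

section SublinearSequence

variable {f : ℕ → ℝ}

lemma eventually_lt_natCast_of_tendsto_div (hf : Tendsto (fun n => f n / n) atTop (𝓝 0)) :
    ∀ᶠ n : ℕ in atTop, f n < n := by
  filter_upwards [hf.eventually (gt_mem_nhds one_pos), eventually_gt_atTop 0] with n h hn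
  exact (div_lt_one (Nat.cast_pos.2 hn)).1 h

lemma tendsto_natCast_sub_atTop (hf : Tendsto (fun n => f n / n) atTop (𝓝 0)) :
    Tendsto (fun n : ℕ => (n : ℝ) - f n) atTop atTop := by
  refine ((hf.const_sub 1).pos_mul_atTop (by norm_num) tendsto_natCast_atTop_atTop).congr' ?_
  filter_upwards [eventually_gt_atTop 0] with n hn
  have : (n : ℝ) ≠ 0 := by positivity
  field_simp

lemma tendsto_div_natCast_sub (hf : Tendsto (fun n => f n / n) atTop (𝓝 0)) :
    Tendsto (fun n : ℕ => f n / (n - f n)) atTop (𝓝 0) := by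
  have h := hf.div (hf.const_sub 1) (by norm_num)
  rw [sub_zero, div_one] at h
  refine h.congr' ?_
  filter_upwards [eventually_gt_atTop 0] with n hn
  rw [Pi.div_apply, one_sub_div (by positivity), div_div_div_cancel_right₀ (by positivity)]

lemma tendsto_sqrt_mul_sqrt_div_natCast_sub (hf0 : ∀ᶠ n in atTop, 0 < f n)
    (hf : Tendsto (fun n => f n / n) atTop (𝓝 0)) :
    Tendsto (fun n : ℕ => √(f n) * √(n / (2 * f n * (n - f n)))) atTop (𝓝 (1 / √2)) := by
  have h := (((hf.const_sub 1).const_mul 2).inv₀ (by norm_num)).sqrt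
  rw [sub_zero, mul_one, sqrt_inv, ← one_div] at h
  refine h.congr' ?_
  filter_upwards [hf0, eventually_lt_natCast_of_tendsto_div hf] with n hf0n hfn
  have : (n : ℝ) - f n ≠ 0 := (sub_pos.2 hfn).ne'
  have : (n : ℝ) ≠ 0 := (hf0n.trans hfn).ne'
  rw [← sqrt_mul hf0n.le]
  congr 1
  field_simp

end SublinearSequence

/-- `n` times the Kullback–Leibler divergence of Bernoulli(`a/n`) from Bernoulli(`b/n`). -/
noncomputable def binomialDivergence (n a b : ℝ) : ℝ :=
  a * log (a / b) + (n - a) * log ((n - a) / (n - b))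

lemma tendsto_binomialDivergence {a b : ℕ → ℝ} {s : ℝ} (hb : Tendsto b atTop atTop)
    (hbn : Tendsto (fun n => b n / n) atTop (𝓝 0))
    (hs : Tendsto (fun n => (a n - b n) / √(b n)) atTop (𝓝 s)) :
    Tendsto (fun n : ℕ => binomialDivergence n (a n) (b n)) atTop (𝓝 (s ^ 2 / 2)) := by
  have h := (tendsto_sub_div_sqrt_of_tendsto_div (hb.eventually_gt_atTop 0) hs
    (tendsto_div_natCast_sub hbn)).neg
  rw [neg_zero] at h
  have hcompl := tendsto_mul_log_div_sub (tendsto_natCast_sub_atTop hbn)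
    (a := fun n : ℕ => (n : ℝ) - a n) (h.congr fun n => by ring)
  convert (tendsto_mul_log_div_sub hb hs).add hcompl using 2
  · simp only [binomialDivergence]
    ring
  · ring

lemma factorial_eq_stirlingSeq_mul {k : ℕ} (hk : k ≠ 0) :
    (k ! : ℝ) = stirlingSeq k * √(2 * k) * (k / exp 1) ^ k := by
  rw [stirlingSeq, mul_assoc, div_mul_cancel₀ _ (by positivity)]

lemma exp_neg_mul_log_div {k : ℕ} {b : ℝ} (hk : k ≠ 0) (hb : 0 < b) :
    exp (-(k * log (k / b))) = (b / k) ^ k := by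
  rw [← mul_neg, ← log_inv, inv_div, exp_nat_mul, exp_log (by positivity)]

lemma binomProb_eq_stirlingSeq_mul {n k : ℕ} {p : ℝ} (hk : k ≠ 0) (hkn : k < n)
    (hp : p ∈ Set.Ioo 0 1) :
    binomProb n p k = stirlingSeq n / (stirlingSeq k * stirlingSeq (n - k)) *
      √(n / (2 * k * (n - k))) * exp (-binomialDivergence n k (n * p)) := by
  obtain ⟨hp0, hp1⟩ := hp
  have hnk : n - k ≠ 0 := (Nat.sub_pos_of_lt hkn).ne'
  have hn : (0 : ℝ) < n := by exact_mod_cast hk.bot_lt.trans hkn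
  have hcast : ((n - k : ℕ) : ℝ) = n - k := Nat.cast_sub hkn.le
  rw [binomialDivergence, ← hcast, neg_add, exp_add, exp_neg_mul_log_div hk (by positivity),
    exp_neg_mul_log_div hnk (by nlinarith), binomProb, Nat.cast_choose ℝ hkn.le,
    factorial_eq_stirlingSeq_mul (hk.bot_lt.trans hkn).ne', factorial_eq_stirlingSeq_mul hk,
    factorial_eq_stirlingSeq_mul hnk]
  have hsqrt : √(2 * n) / (√(2 * k) * √(2 * (n - k : ℕ))) = √(n / (2 * k * (n - k : ℕ))) := by
    rw [← sqrt_mul (by positivity), ← sqrt_div' _ (by positivity)]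
    congr 1
    field_simp
  have hpow : ((n : ℝ) / exp 1) ^ n = (n / exp 1) ^ k * (n / exp 1) ^ (n - k) := by
    rw [← pow_add, Nat.add_sub_cancel' hkn.le]
  rw [← hsqrt, hpow, show (n : ℝ) - n * p = n * (1 - p) by ring]
  simp only [div_pow, mul_pow]
  field_simp

lemma tendsto_stirlingSeq_div_mul {k : ℕ → ℕ} (hk : Tendsto k atTop atTop)
    (hnk : Tendsto (fun n => n - k n) atTop atTop) :
    Tendsto (fun n => stirlingSeq n / (stirlingSeq (k n) * stirlingSeq (n - k n))) atTop
      (𝓝 (1 / √π)) := by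
  have hπ : 0 < √π := sqrt_pos.2 pi_pos
  have h := tendsto_stirlingSeq_sqrt_pi.div ((tendsto_stirlingSeq_sqrt_pi.comp hk).mul
    (tendsto_stirlingSeq_sqrt_pi.comp hnk)) (by positivity)
  rwa [div_mul_cancel_left₀ hπ.ne', ← one_div] at h

theorem sqrt_mul_binomProb_tendsto_gaussian_general (j : ℕ → ℕ) (p : ℕ → ℝ) (t : ℝ)
    (hj : Tendsto (fun n => (j n : ℝ)) atTop atTop)
    (hjn : Tendsto (fun n => (j n : ℝ) / n) atTop (nhds 0))
    (hp : ∀ n, p n ∈ Set.Ioo (0:ℝ) 1)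
    (ht : Tendsto (fun n => ((j n : ℝ) - n * p n) / Real.sqrt (n * p n)) atTop (nhds t)) :
    Tendsto (fun n => Real.sqrt (j n) * binomProb n (p n) (j n)) atTop
      (nhds ((1 / Real.sqrt (2 * π)) * Real.exp (- t ^ 2 / 2))) := by
  have hm : Tendsto (fun n => n * p n) atTop atTop := tendsto_atTop_of_tendsto_sub_div_sqrt hj
    ((eventually_gt_atTop 0).mono fun n hn => mul_pos (Nat.cast_pos.2 hn) (hp n).1) ht
  have hjn_lt : ∀ᶠ n in atTop, j n < n :=
    (eventually_lt_natCast_of_tendsto_div hjn).mono fun n h => by exact_mod_cast h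
  have hnj : Tendsto (fun n => n - j n) atTop atTop :=
    tendsto_natCast_atTop_iff.mp ((tendsto_natCast_sub_atTop hjn).congr'
      (hjn_lt.mono fun n h => (Nat.cast_sub h.le).symm))
  have hdiv :=
    tendsto_binomialDivergence hm (tendsto_div_zero_of_tendsto_sub_div_sqrt hm ht hjn) ht
  have hlim := ((tendsto_stirlingSeq_div_mul (tendsto_natCast_atTop_iff.mp hj) hnj).mul
    (tendsto_sqrt_mul_sqrt_div_natCast_sub (hj.eventually_gt_atTop 0) hjn)).mul
    ((continuous_exp.tendsto _).comp hdiv.neg)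
  rw [show 1 / √π * (1 / √2) = 1 / √(2 * π) by
    rw [sqrt_mul zero_le_two, one_div_mul_one_div, mul_comm], ← neg_div] at hlim
  refine hlim.congr' ?_
  filter_upwards [hj.eventually_gt_atTop 0, hjn_lt] with n hj0 hjn_n
  rw [binomProb_eq_stirlingSeq_mul (by exact_mod_cast hj0.ne') hjn_n (hp n)]
  simp only [Function.comp_apply]
  ring

/-- If `j_n → ∞`, `j_n/n → 0`, `p_n ∈ (0,1)` and
`(j_n - n p_n)/√(n p_n) → t`, then `√(j_n) β_{n,p_n}(j_n) → φ(t)`, the standard normal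
density at `t`. -/
theorem sqrt_mul_binomProb_tendsto_gaussian (j : ℕ → ℕ) (p : ℕ → ℝ) (t : ℝ)
    (hjpos : ∀ n, 0 < j n)
    (hj : Tendsto (fun n => (j n : ℝ)) atTop atTop)
    (hjn : Tendsto (fun n => (j n : ℝ) / n) atTop (nhds 0))
    (hp : ∀ n, p n ∈ Set.Ioo (0:ℝ) 1)
    (ht : Tendsto (fun n => ((j n : ℝ) - n * p n) / Real.sqrt (n * p n)) atTop (nhds t)) :
    Tendsto (fun n => Real.sqrt (j n) * binomProb n (p n) (j n)) atTop
      (nhds ((1 / Real.sqrt (2 * π)) * Real.exp (- t ^ 2 / 2))) :=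
  sqrt_mul_binomProb_tendsto_gaussian_general j p t hj hjn hp ht
end

section
/- If f is the standard bivariate normal density f(x₁,x₂) = (1/(2π)) e^{−(x₁²+x₂²)/2}, then for every k ≥ 0, p(k) = ((α/2)t)^k/k! · ∫_{ℝ²} e^{−(α/2) t f(x)} f(x)^{k+1} dx = (4π/(αt)) − e^{−αt/(4π)} · Σ_{i=0}^{k} (αt/(4π))^{i−1}/i!. -/
/-!
With `φ(r) = exp (-r²/2)` the density is `f x = φ ‖x‖ / (2π)`, so the integrand is a radial
function. Polar coordinates followed by the substitution `u = φ r` (for which `r φ r dr = -du`)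
reduce the integral to `(2π)^{-k} ∫₀¹ e^{-cu} uᵏ du` with `c = αt/(4π)`, and repeated
integration by parts gives `cᵏ/k! ∫₀¹ e^{-cu} uᵏ du = 1/c - e^{-c} ∑_{i ≤ k} c^{i-1}/i!`.
-/

open Real MeasureTheory Set

section IncompleteGamma

variable {c : ℝ}

lemma hasDerivAt_neg_exp_neg_mul_div (hc : c ≠ 0) (x : ℝ) :
    HasDerivAt (fun u => -exp (-(c * u)) / c) (exp (-(c * x))) x := by
  have hlin : HasDerivAt (fun u => -(c * u)) (-c) x := by
    simpa using (hasDerivAt_id x).const_mul (-c)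
  rw [show (fun u => -exp (-(c * u)) / c) = fun u => -c⁻¹ * exp (-(c * u)) by ext; ring]
  exact (hlin.exp.const_mul (-c⁻¹)).congr_deriv (by field_simp)

lemma integral_exp_neg_mul (hc : c ≠ 0) :
    ∫ u in (0 : ℝ)..1, exp (-(c * u)) = (1 - exp (-c)) / c := by
  rw [intervalIntegral.integral_eq_sub_of_hasDerivAt (fun x _ => hasDerivAt_neg_exp_neg_mul_div hc x)
    ((by fun_prop : Continuous fun u => exp (-(c * u))).intervalIntegrable _ _)]
  simp only [mul_one, mul_zero, neg_zero, exp_zero]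
  ring

lemma integral_exp_neg_mul_mul_pow_succ (hc : c ≠ 0) (k : ℕ) :
    ∫ u in (0 : ℝ)..1, exp (-(c * u)) * u ^ (k + 1) =
      -exp (-c) / c + (k + 1) / c * ∫ u in (0 : ℝ)..1, exp (-(c * u)) * u ^ k := by
  have hparts := intervalIntegral.integral_mul_deriv_eq_deriv_mul
    (a := 0) (b := 1) (u := fun u : ℝ => u ^ (k + 1)) (u' := fun u => (k + 1) * u ^ k)
    (fun x _ => by simpa using hasDerivAt_pow (k + 1) x)
    (fun x _ => hasDerivAt_neg_exp_neg_mul_div hc x)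
    ((by fun_prop : Continuous fun u : ℝ => ((k : ℝ) + 1) * u ^ k).intervalIntegrable _ _)
    ((by fun_prop : Continuous fun u => exp (-(c * u))).intervalIntegrable _ _)
  simp_rw [mul_comm (exp _)] at hparts ⊢
  rw [hparts, ← intervalIntegral.integral_const_mul, sub_eq_add_neg,
    ← intervalIntegral.integral_neg]
  simp only [one_pow, zero_pow (Nat.succ_ne_zero k), mul_one, one_mul, zero_mul, sub_zero]
  congr 1
  congr 1 with u
  ring

theorem pow_div_factorial_mul_integral_exp_neg_mul_pow (hc : c ≠ 0) (k : ℕ) :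
    c ^ k / k.factorial * ∫ u in (0 : ℝ)..1, exp (-(c * u)) * u ^ k =
      1 / c - exp (-c) * ∑ i ∈ Finset.range (k + 1), c ^ ((i : ℤ) - 1) / i.factorial := by
  induction k with
  | zero =>
    simp only [pow_zero, Nat.factorial_zero, Nat.cast_one, div_one, one_mul, mul_one, zero_add,
      Finset.sum_range_one, Nat.cast_zero, zero_sub, zpow_neg_one, integral_exp_neg_mul hc]
    field_simp
  | succ k ih =>
    rw [integral_exp_neg_mul_mul_pow_succ hc, Finset.sum_range_succ, mul_add (exp (-c)), ← sub_sub,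
      ← ih, Nat.factorial_succ]
    push_cast
    rw [add_sub_cancel_right, zpow_natCast]
    field_simp
    ring

end IncompleteGamma

section RadialIntegrals

variable {E : Type*} [NormedAddCommGroup E] [NormedSpace ℝ E]

theorem integral_comp_norm_complex (g : ℝ → E) :
    ∫ x : ℂ, g ‖x‖ = (2 * π) • ∫ r in Ioi (0 : ℝ), r • g r := by
  rw [integral_fun_norm_addHaar, Measure.real, Complex.volume_ball]
  simp [Complex.finrank_real_complex, mul_smul, ofNat_smul_eq_nsmul]

lemma hasDerivAt_exp_neg_sq_div_two (r : ℝ) :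
    HasDerivAt (fun r => exp (-r ^ 2 / 2)) (-r * exp (-r ^ 2 / 2)) r := by
  have hquad : HasDerivAt (fun r : ℝ => -r ^ 2 / 2) (-r) r := by
    rw [show (fun r : ℝ => -r ^ 2 / 2) = fun r => -1 / 2 * r ^ 2 by ext; ring]
    exact ((hasDerivAt_pow 2 r).const_mul _).congr_deriv (by ring)
  simpa [mul_comm] using hquad.exp

lemma strictAntiOn_exp_neg_sq_div_two : StrictAntiOn (fun r : ℝ => exp (-r ^ 2 / 2)) (Ioi 0) :=
  fun a ha b _ hab => exp_lt_exp.2 (by have : (0 : ℝ) < a := ha; nlinarith)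

lemma image_exp_neg_sq_div_two_Ioi : (fun r : ℝ => exp (-r ^ 2 / 2)) '' Ioi 0 = Ioo 0 1 := by
  ext u
  constructor
  · rintro ⟨r, hr, rfl⟩
    exact ⟨exp_pos _, exp_lt_one_iff.2 (by have : (0 : ℝ) < r := hr; nlinarith)⟩
  · rintro ⟨hu0, hu1⟩
    have hlog : log u < 0 := log_neg hu0 hu1
    refine ⟨√(-2 * log u), sqrt_pos.2 (by linarith), ?_⟩
    simp only [sq_sqrt (by linarith : 0 ≤ -2 * log u)]
    rw [show -(-2 * log u) / 2 = log u by ring, exp_log hu0]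

theorem integral_Ioi_mul_exp_neg_sq_div_two_smul (h : ℝ → E) :
    ∫ r in Ioi (0 : ℝ), (r * exp (-r ^ 2 / 2)) • h (exp (-r ^ 2 / 2)) = ∫ u in (0 : ℝ)..1, h u := by
  rw [intervalIntegral.integral_of_le zero_le_one, integral_Ioc_eq_integral_Ioo,
    ← image_exp_neg_sq_div_two_Ioi,
    integral_image_eq_integral_abs_deriv_smul measurableSet_Ioi
      (fun r _ => (hasDerivAt_exp_neg_sq_div_two r).hasDerivWithinAt)
      strictAntiOn_exp_neg_sq_div_two.injOn]
  refine setIntegral_congr_fun measurableSet_Ioi fun r (hr : 0 < r) => ?_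
  rw [abs_of_nonpos (by nlinarith [exp_pos (-r ^ 2 / 2)]), neg_mul, neg_neg]

theorem integral_complex_exp_neg_norm_sq_div_two_smul (h : ℝ → E) :
    ∫ x : ℂ, exp (-‖x‖ ^ 2 / 2) • h (exp (-‖x‖ ^ 2 / 2)) = (2 * π) • ∫ u in (0 : ℝ)..1, h u := by
  rw [integral_comp_norm_complex fun r => exp (-r ^ 2 / 2) • h (exp (-r ^ 2 / 2)),
    ← integral_Ioi_mul_exp_neg_sq_div_two_smul]
  simp only [smul_smul]

end RadialIntegrals

/-- If `f` is the standard bivariate normal density (the plane being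
modeled as `ℂ`), then the degree distribution satisfies
`p(k) = 4π/(αt) - e^{-αt/(4π)} Σ_{i=0}^k (αt/(4π))^{i-1}/i!`. -/
theorem degree_distribution_gaussian (α t : ℝ) (hα : α ∈ Set.Ioc 0 (2 * π)) (ht : 0 < t)
    (f : ℂ → ℝ)
    (hf : ∀ x : ℂ, f x = (1 / (2 * π)) * Real.exp (-(x.re ^ 2 + x.im ^ 2) / 2))
    (k : ℕ) :
    ((α / 2 * t) ^ k / (Nat.factorial k : ℝ)) *
        ∫ x : ℂ, Real.exp (-(α / 2 * t * f x)) * f x ^ (k + 1) =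
      4 * π / (α * t) -
        Real.exp (-(α * t) / (4 * π)) *
          ∑ i ∈ Finset.range (k + 1),
            (α * t / (4 * π)) ^ ((i : ℤ) - 1) / (Nat.factorial i : ℝ) := by
  have hα0 : 0 < α := hα.1
  set c := α * t / (4 * π) with hc_def
  have hc : c ≠ 0 := by positivity
  clear_value c
  have hintegrand (x : ℂ) : exp (-(α / 2 * t * f x)) * f x ^ (k + 1) =
      (2 * π)⁻¹ ^ (k + 1) * (exp (-‖x‖ ^ 2 / 2) *
        (exp (-(c * exp (-‖x‖ ^ 2 / 2))) * exp (-‖x‖ ^ 2 / 2) ^ k)) := by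
    have hnorm : x.re ^ 2 + x.im ^ 2 = ‖x‖ ^ 2 := by
      rw [Complex.sq_norm, Complex.normSq_apply]
      ring
    have hexponent : α / 2 * t * ((2 * π)⁻¹ * exp (-‖x‖ ^ 2 / 2)) = c * exp (-‖x‖ ^ 2 / 2) := by
      rw [hc_def]
      field_simp
      ring
    rw [hf, hnorm, one_div, hexponent, mul_pow]
    ring
  have hscale : (α / 2 * t) ^ k * ((2 * π)⁻¹ ^ (k + 1) * (2 * π)) = c ^ k := by
    rw [pow_succ, inv_mul_cancel_right₀ (by positivity), ← mul_pow, hc_def]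
    congr 1
    field_simp
    ring
  calc _ = (α / 2 * t) ^ k / k.factorial *
        ((2 * π)⁻¹ ^ (k + 1) * (2 * π * ∫ u in (0 : ℝ)..1, exp (-(c * u)) * u ^ k)) := by
        simp_rw [hintegrand, ← smul_eq_mul (exp (-‖_‖ ^ 2 / 2))]
        rw [integral_const_mul, integral_complex_exp_neg_norm_sq_div_two_smul
          fun u => exp (-(c * u)) * u ^ k, smul_eq_mul]
    _ = c ^ k / k.factorial * ∫ u in (0 : ℝ)..1, exp (-(c * u)) * u ^ k := by
        rw [← hscale]
        ring
    _ = _ := by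
        rw [pow_div_factorial_mul_integral_exp_neg_mul_pow hc, hc_def, one_div_div, neg_div]
end

section
/- With f the standard bivariate normal density and p(k) as in the previous statement, p(0) = (4π/(αt))(1 − e^{−αt/(4π)}), and consequently p(0) → 1 as t → 0⁺ and p(0) → 0 as t → ∞. -/
/-!
Since `f` is radial, the integral reduces in polar coordinates to
`∫₀^∞ r e^{-c e^{-r²/2}} e^{-r²/2} dr` with `c = αt/(4π)`, and the integrand is the derivative of
`c⁻¹ e^{-c e^{-r²/2}}`. Hence `p(0) = (1 - e^{-c})/c`, which tends to `1` as `c → 0⁺` (it is a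
difference quotient of `c ↦ 1 - e^{-c}` at `0`) and to `0` as `c → ∞`.
-/

open Real MeasureTheory Filter Set Topology

theorem Complex.integral_fun_norm {F : Type*} [NormedAddCommGroup F] [NormedSpace ℝ F]
    (φ : ℝ → F) : ∫ x : ℂ, φ ‖x‖ = (2 * π) • ∫ r in Ioi (0 : ℝ), r • φ r := by
  rw [integral_fun_norm_addHaar volume φ, mul_smul, ← Nat.cast_smul_eq_nsmul ℝ]
  simp [measureReal_def, Complex.finrank_real_complex]

theorem hasDerivAt_inv_mul_exp_neg_mul_exp_neg_sq_div_two {c : ℝ} (hc : c ≠ 0) (r : ℝ) :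
    HasDerivAt (fun r ↦ c⁻¹ * exp (-(c * exp (-r ^ 2 / 2))))
      (r * (exp (-(c * exp (-r ^ 2 / 2))) * exp (-r ^ 2 / 2))) r := by
  have hgauss : HasDerivAt (fun r : ℝ ↦ -r ^ 2 / 2) (-r) r :=
    ((hasDerivAt_pow 2 r).neg.div_const 2).congr_deriv (by ring)
  refine (((hgauss.exp.const_mul c).neg.exp).const_mul c⁻¹).congr_deriv ?_
  simp only [Pi.neg_apply]
  field_simp

theorem tendsto_exp_neg_sq_div_two_atTop :
    Tendsto (fun r : ℝ ↦ exp (-r ^ 2 / 2)) atTop (𝓝 0) :=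
  tendsto_exp_atBot.comp <| (tendsto_neg_atBot_iff.mpr
    (tendsto_pow_atTop two_ne_zero)).atBot_div_const two_pos

theorem integral_Ioi_mul_exp_neg_mul_exp_neg_sq_div_two {c : ℝ} (hc : c ≠ 0) :
    ∫ r in Ioi (0 : ℝ), r * (exp (-(c * exp (-r ^ 2 / 2))) * exp (-r ^ 2 / 2)) =
      (1 - exp (-c)) / c := by
  have hcont : Continuous fun y ↦ c⁻¹ * exp (-(c * y)) := by fun_prop
  have hlim : Tendsto (fun r ↦ c⁻¹ * exp (-(c * exp (-r ^ 2 / 2)))) atTop (𝓝 c⁻¹) := by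
    simpa [Function.comp_def] using (hcont.tendsto 0).comp tendsto_exp_neg_sq_div_two_atTop
  rw [integral_Ioi_of_hasDerivAt_of_nonneg'
    (fun r _ ↦ hasDerivAt_inv_mul_exp_neg_mul_exp_neg_sq_div_two hc r)
    (fun r hr ↦ by have := le_of_lt (mem_Ioi.mp hr); positivity) hlim]
  field_simp
  simp

theorem integral_exp_neg_mul_exp_neg_norm_sq_div_two {c : ℝ} (hc : c ≠ 0) :
    ∫ x : ℂ, exp (-(c * exp (-‖x‖ ^ 2 / 2))) * exp (-‖x‖ ^ 2 / 2) =
      2 * π * ((1 - exp (-c)) / c) := by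
  rw [Complex.integral_fun_norm fun r ↦ exp (-(c * exp (-r ^ 2 / 2))) * exp (-r ^ 2 / 2)]
  simp only [smul_eq_mul]
  rw [integral_Ioi_mul_exp_neg_mul_exp_neg_sq_div_two hc]

theorem tendsto_one_sub_exp_neg_div_nhdsNE_zero :
    Tendsto (fun c : ℝ ↦ (1 - exp (-c)) / c) (𝓝[≠] 0) (𝓝 1) := by
  have hderiv : HasDerivAt (fun c : ℝ ↦ 1 - exp (-c)) 1 0 := by
    simpa using ((hasDerivAt_neg 0).exp).const_sub 1
  simpa [slope_fun_def_field] using hasDerivAt_iff_tendsto_slope.mp hderiv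

theorem tendsto_one_sub_exp_neg_div_atTop :
    Tendsto (fun c : ℝ ↦ (1 - exp (-c)) / c) atTop (𝓝 0) :=
  (tendsto_const_nhds.sub tendsto_exp_neg_atTop_nhds_zero).div_atTop tendsto_id

theorem tendsto_const_mul_nhdsGT_zero {k : ℝ} (hk : 0 < k) :
    Tendsto (fun t : ℝ ↦ k * t) (𝓝[>] 0) (𝓝[>] 0) := by
  refine tendsto_nhdsWithin_of_tendsto_nhds_of_eventually_within _ ?_ ?_
  · simpa using ((continuous_const_mul k).tendsto 0).mono_left nhdsWithin_le_nhds
  · filter_upwards [self_mem_nhdsWithin] with t ht using mul_pos hk ht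

/-- With `f` the standard bivariate normal density,
`p(0) = (4π/(αt))(1 - e^{-αt/(4π)})`, and consequently `p(0) → 1` as `t → 0⁺` and
`p(0) → 0` as `t → ∞`. -/
theorem degree_distribution_gaussian_zero (α : ℝ) (hα : α ∈ Set.Ioc 0 (2 * π))
    (f : ℂ → ℝ)
    (hf : ∀ x : ℂ, f x = (1 / (2 * π)) * Real.exp (-(x.re ^ 2 + x.im ^ 2) / 2)) :
    (∀ t : ℝ, 0 < t →
        ∫ x : ℂ, Real.exp (-(α / 2 * t * f x)) * f x =
          (4 * π / (α * t)) * (1 - Real.exp (-(α * t) / (4 * π)))) ∧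
    Tendsto (fun t : ℝ => ∫ x : ℂ, Real.exp (-(α / 2 * t * f x)) * f x)
      (nhdsWithin 0 (Set.Ioi 0)) (nhds 1) ∧
    Tendsto (fun t : ℝ => ∫ x : ℂ, Real.exp (-(α / 2 * t * f x)) * f x)
      atTop (nhds 0) := by
  have hk : 0 < α / (4 * π) := by have := hα.1; positivity
  have hf_norm (x : ℂ) : f x = (2 * π)⁻¹ * exp (-‖x‖ ^ 2 / 2) := by
    rw [hf, Complex.sq_norm, Complex.normSq_apply, one_div, sq, sq]
  have hp : ∀ t : ℝ, 0 < t → ∫ x : ℂ, exp (-(α / 2 * t * f x)) * f x =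
      (1 - exp (-(α / (4 * π) * t))) / (α / (4 * π) * t) := by
    intro t ht
    have hc : α / (4 * π) * t ≠ 0 := (mul_pos hk ht).ne'
    have hintegrand (x : ℂ) : exp (-(α / 2 * t * f x)) * f x = (2 * π)⁻¹ *
        (exp (-(α / (4 * π) * t * exp (-‖x‖ ^ 2 / 2))) * exp (-‖x‖ ^ 2 / 2)) := by
      rw [hf_norm]
      field_simp
      ring_nf
    simp_rw [hintegrand]
    rw [integral_const_mul, integral_exp_neg_mul_exp_neg_norm_sq_div_two hc]
    field_simp
  refine ⟨fun t ht ↦ ?_, ?_, ?_⟩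
  · rw [hp t ht]
    field_simp
  · refine ((tendsto_one_sub_exp_neg_div_nhdsNE_zero.mono_left (nhdsGT_le_nhdsNE 0)).comp
      (tendsto_const_mul_nhdsGT_zero hk)).congr' ?_
    filter_upwards [self_mem_nhdsWithin] with t ht using (hp t ht).symm
  · refine (tendsto_one_sub_exp_neg_div_atTop.comp (tendsto_id.const_mul_atTop hk)).congr' ?_
    filter_upwards [eventually_gt_atTop 0] with t ht using (hp t ht).symm
end

section
/- Under the same setup as the previous statement but with for in-degree: let q_n(x,t) = (α/(2π)) F(B(x, r_n(t))). Then n^{−1} E[ξ_n^{in}(t,A)] = ∫_A P[Bin(n−1, q_n(x,t)) ≥ k] f(x) dx → ∫_A P[Poi((α/2) t f(x)) ≥ k] f(x) dx as n → ∞. -/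
open Real MeasureTheory Filter

/-- `P[Bin(m,p) ≥ k]`, the upper tail of a binomial distribution. -/
noncomputable def binomTail (m : ℕ) (p : ℝ) (k : ℕ) : ℝ :=
  ∑ j ∈ Finset.Icc k m, (m.choose j : ℝ) * p ^ j * (1 - p) ^ (m - j)

/-- `P[Poi(l) ≥ k]`, the upper tail of a Poisson distribution with mean `l`. -/
noncomputable def poiTail (l : ℝ) (k : ℕ) : ℝ :=
  1 - ∑ j ∈ Finset.range k, Real.exp (-l) * l ^ j / (Nat.factorial j : ℝ)

/-!
At a Lebesgue point `x` of `f` the Lebesgue differentiation theorem gives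
`n F(B(x, √(t/n))) → π t f(x)`, so `(n - 1) q_n(x,t) → (α/2) t f(x)` and the Poisson limit
theorem makes the binomial tails converge pointwise almost everywhere. The tails lie in `[0, 1]`,
so dominated convergence with dominating function `f` passes to the limit under the integral.
-/

open Topology Metric Finset

lemma sum_range_choose_mul_pow_mul_one_sub_pow (m : ℕ) (p : ℝ) :
    ∑ j ∈ range (m + 1), (m.choose j : ℝ) * p ^ j * (1 - p) ^ (m - j) = 1 := by
  have h := add_pow p (1 - p) m
  rw [add_sub_cancel, one_pow] at h
  exact (sum_congr rfl fun j _ => by ring).trans h.symm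

lemma binomTail_eq_one_sub {m k : ℕ} {p : ℝ} (hk : k ≤ m) :
    binomTail m p k = 1 - ∑ j ∈ range k, (m.choose j : ℝ) * p ^ j * (1 - p) ^ (m - j) := by
  have hIcc : Icc k m = range (m + 1) \ range k := by
    ext j
    simp only [mem_Icc, Finset.mem_sdiff, Finset.mem_range]
    omega
  rw [binomTail, hIcc, sum_sdiff_eq_sub (range_subset_range.2 (by omega)),
    sum_range_choose_mul_pow_mul_one_sub_pow]

lemma binomTail_mem_Icc {m k : ℕ} {p : ℝ} (hp : p ∈ Set.Icc 0 1) :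
    binomTail m p k ∈ Set.Icc 0 1 := by
  obtain ⟨hp0, hp1⟩ := hp
  have hq0 : 0 ≤ 1 - p := sub_nonneg.2 hp1
  have hterm : ∀ j, 0 ≤ (m.choose j : ℝ) * p ^ j * (1 - p) ^ (m - j) := fun j => by positivity
  refine ⟨sum_nonneg fun j _ => hterm j, ?_⟩
  rw [← sum_range_choose_mul_pow_mul_one_sub_pow m p]
  refine sum_le_sum_of_subset_of_nonneg (fun j hj => ?_) fun j _ _ => hterm j
  simp only [mem_Icc, Finset.mem_range] at hj ⊢
  omega

lemma continuous_binomTail (m k : ℕ) : Continuous fun p => binomTail m p k := by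
  unfold binomTail
  fun_prop

lemma tendsto_binomTail_poiTail {k : ℕ} {p : ℕ → ℝ} {r : ℝ}
    (hr : Tendsto (fun n => n * p n) atTop (𝓝 r)) :
    Tendsto (fun n => binomTail n (p n) k) atTop (𝓝 (poiTail r k)) := by
  refine Tendsto.congr' ?_ (tendsto_const_nhds.sub (tendsto_finsetSum (range k) fun j _ =>
    ProbabilityTheory.tendsto_choose_mul_pow_of_tendsto_mul_atTop j hr))
  filter_upwards [eventually_ge_atTop k] with n hn
  exact (binomTail_eq_one_sub hn).symm

lemma tendsto_binomTail_sub_one_poiTail {k : ℕ} {p : ℕ → ℝ} {r : ℝ}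
    (hr : Tendsto (fun n => n * p n) atTop (𝓝 r)) :
    Tendsto (fun n => binomTail (n - 1) (p n) k) atTop (𝓝 (poiTail r k)) := by
  rw [← tendsto_add_atTop_iff_nat 1]
  refine tendsto_binomTail_poiTail ?_
  have hshift := (tendsto_natCast_div_add_atTop (1 : ℝ)).mul ((tendsto_add_atTop_iff_nat 1).2 hr)
  rw [one_mul] at hshift
  refine hshift.congr fun n => ?_
  push_cast
  field_simp

lemma stronglyMeasurable_setIntegral_ball {α E : Type*} [PseudoMetricSpace α] [MeasurableSpace α]
    [OpensMeasurableSpace α] [SecondCountableTopology α] [NormedAddCommGroup E] [NormedSpace ℝ E]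
    (μ : Measure α) [SFinite μ] {f : α → E} (hf : StronglyMeasurable f) (r : ℝ) :
    StronglyMeasurable fun x => ∫ y in ball x r, f y ∂μ := by
  set S : Set (α × α) := {q | dist q.2 q.1 < r}
  have hS : MeasurableSet S := (isOpen_lt (continuous_snd.dist continuous_fst)
    continuous_const).measurableSet
  have hF : StronglyMeasurable (S.indicator fun q => f q.2) :=
    (hf.comp_measurable measurable_snd).indicator hS
  convert hF.integral_prod_right' (ν := μ) using 2 with x
  rw [← integral_indicator measurableSet_ball]
  rfl

lemma ball_ae_eq_closedBall {E : Type*} [NormedAddCommGroup E] [NormedSpace ℝ E] [MeasurableSpace E]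
    [BorelSpace E] [FiniteDimensional ℝ E] [Nontrivial E] (μ : Measure E) [μ.IsAddHaarMeasure]
    (x : E) (r : ℝ) : ball x r =ᵐ[μ] closedBall x r := by
  refine ae_eq_set.2 ⟨?_, ?_⟩
  · simp [Set.sdiff_eq_empty.2 ball_subset_closedBall]
  · rw [closedBall_sdiff_ball]
    exact Measure.addHaar_sphere μ x r

lemma Complex.setIntegral_ball_eq_mul_setAverage (f : ℂ → ℝ) (x : ℂ) {r : ℝ} (hr : 0 ≤ r) :
    ∫ z in ball x r, f z = π * r ^ 2 * ⨍ z in closedBall x r, f z := by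
  rw [setIntegral_congr_set (ball_ae_eq_closedBall volume x r),
    ← measure_smul_setAverage _ measure_closedBall_lt_top.ne, smul_eq_mul, Measure.real,
    Complex.volume_closedBall]
  simp [hr, mul_comm]

lemma tendsto_sqrt_div_natCast_nhdsGT_zero {t : ℝ} (ht : 0 < t) :
    Tendsto (fun n : ℕ => √(t / n)) atTop (𝓝[>] 0) := by
  refine tendsto_nhdsWithin_iff.2 ⟨?_, ?_⟩
  · simpa only [sqrt_zero] using (tendsto_const_div_atTop_nhds_zero_nat t).sqrt
  · filter_upwards [eventually_gt_atTop 0] with n hn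
    exact sqrt_pos.2 (div_pos ht (Nat.cast_pos.2 hn))

lemma Complex.ae_tendsto_natCast_mul_setIntegral_ball {f : ℂ → ℝ} (hf : LocallyIntegrable f)
    {t : ℝ} (ht : 0 < t) :
    ∀ᵐ x, Tendsto (fun n : ℕ => n * ∫ z in ball x √(t / n), f z) atTop (𝓝 (π * t * f x)) := by
  filter_upwards [IsUnifLocDoublingMeasure.ae_tendsto_average volume hf 1] with x hx
  have havg := hx (fun _ => x) _ (tendsto_sqrt_div_natCast_nhdsGT_zero ht)
    (.of_forall fun n => mem_closedBall_self (by positivity))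
  refine (havg.const_mul (π * t)).congr' ?_
  filter_upwards [eventually_ne_atTop 0] with n hn
  rw [Complex.setIntegral_ball_eq_mul_setAverage f x (sqrt_nonneg _), sq_sqrt (by positivity)]
  field_simp

theorem in_degree_mean_limit_general (α t : ℝ) (hα : α ∈ Set.Ioc 0 (2 * π)) (ht : 0 < t)
    (f : ℂ → ℝ) (hmeas : Measurable f) (hnonneg : ∀ x, 0 ≤ f x)
    (hint : Integrable f) (hprob : ∫ x : ℂ, f x = 1)
    (A : Set ℂ) (k : ℕ) :
    Tendsto (fun n : ℕ =>
        ∫ x in A,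
          binomTail (n - 1)
            ((α / (2 * π)) * ∫ z in Metric.ball x (Real.sqrt (t / n)), f z) k * f x)
      atTop (nhds (∫ x in A, poiTail (α / 2 * t * f x) k * f x)) := by
  have hc : α / (2 * π) ∈ Set.Icc 0 1 :=
    ⟨div_nonneg hα.1.le (by positivity), div_le_one_of_le₀ hα.2 (by positivity)⟩
  have hball : ∀ x r, ∫ z in ball x r, f z ∈ Set.Icc 0 1 := fun x r =>
    ⟨setIntegral_nonneg measurableSet_ball fun z _ => hnonneg z,
      hprob ▸ setIntegral_le_integral hint (.of_forall hnonneg)⟩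
  have hq : ∀ n x, α / (2 * π) * ∫ z in ball x √(t / n), f z ∈ Set.Icc 0 1 := fun n x =>
    ⟨mul_nonneg hc.1 (hball x _).1, mul_le_one₀ hc.2 (hball x _).1 (hball x _).2⟩
  refine tendsto_integral_of_dominated_convergence f (fun n => ?_) hint.integrableOn
    (fun n => .of_forall fun x => ?_) (ae_restrict_of_ae ?_)
  · exact (((continuous_binomTail _ k).measurable.comp
      ((stronglyMeasurable_setIntegral_ball volume hmeas.stronglyMeasurable _).measurable.const_mul
        _)).mul hmeas).aestronglyMeasurable
  · have hb := binomTail_mem_Icc (m := n - 1) (k := k) (hq n x)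
    rw [norm_mul, norm_of_nonneg hb.1, norm_of_nonneg (hnonneg x)]
    exact mul_le_of_le_one_left (hnonneg x) hb.2
  · filter_upwards [Complex.ae_tendsto_natCast_mul_setIntegral_ball hint.locallyIntegrable ht]
      with x hx
    refine (tendsto_binomTail_sub_one_poiTail ?_).mul_const (f x)
    have hlim : α / (2 * π) * (π * t * f x) = α / 2 * t * f x := by field_simp
    rw [← hlim]
    exact (hx.const_mul _).congr fun n => by ring

/-- In-degree analogue of Statement 10: with
`q_n(x,t) = (α/(2π)) F(B(x,r_n(t)))` and `n r_n(t)² = t`, the expected proportion of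
vertices in `A` of in-degree at least `k`, namely
`∫_A P[Bin(n-1,q_n(x,t)) ≥ k] f(x) dx`, converges to
`∫_A P[Poi((α/2)tf(x)) ≥ k] f(x) dx`. -/
theorem in_degree_mean_limit (α t : ℝ) (hα : α ∈ Set.Ioc 0 (2 * π)) (ht : 0 < t)
    (f : ℂ → ℝ) (hmeas : Measurable f) (hnonneg : ∀ x, 0 ≤ f x)
    (C : ℝ) (hbdd : ∀ x, f x ≤ C)
    (hint : Integrable f) (hprob : ∫ x : ℂ, f x = 1)
    (K : ℝ)
    (hR : ∫ x in {x : ℂ | 0 < f x ∧ ∀ᶠ z in nhds x, |f z - f x| ≤ K * dist z x}, f x = 1)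
    (A : Set ℂ) (hA : MeasurableSet A) (k : ℕ) :
    Tendsto (fun n : ℕ =>
        ∫ x in A,
          binomTail (n - 1)
            ((α / (2 * π)) * ∫ z in Metric.ball x (Real.sqrt (t / n)), f z) k * f x)
      atTop (nhds (∫ x in A, poiTail (α / 2 * t * f x) k * f x)) :=
  in_degree_mean_limit_general α t hα ht f hmeas hnonneg hint hprob A k
end

section
/- Fix x ∈ ℝ² at which f is positive and locally Lipschitz (x ∈ R), with r_n → 0 and n r_n² = s(k_n + t√k_n) where k_n → ∞ and k_n/√n → 0. If s f(x) = 2/α (i.e., x ∈ L_s), then n · F(S(x,y,r_n)) = k_n + t√k_n + o(√k_n) as n → ∞, uniformly in the inclination y. -/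
open Real MeasureTheory Filter

/-- The circular sector with apex `x`, radius `r`, central angle `α` and inclination `y`
(the plane being modeled as `ℂ` with the Euclidean distance). -/
noncomputable def sector (α : ℝ) (x : ℂ) (y r : ℝ) : Set ℂ :=
  {z : ℂ | dist z x < r ∧
    ∃ θ ∈ Set.Icc y (y + α), z - x = ((‖z - x‖ : ℝ) : ℂ) * Complex.exp (θ * Complex.I)}

/-!
On a sector `S` of radius `r` around `x` the Lipschitz bound gives
`∫_S f = |S| f(x) + O(r |S|)` with `|S| = (α/2) r²`, whatever the inclination. With
`c_n = k_n + t√k_n` and `n r_n² = s c_n`, the level-set condition `s f(x) = 2/α` makes the main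
term `n |S| f(x)` exactly `c_n`, and the error `O(n r_n³) = O(c_n r_n)` is of order
`k_n^{3/2} / √n = o(√k_n)` because `k_n / √n → 0`.
-/

open Set Topology

theorem Complex.measurableSet_setOf_norm_lt_arg_mem (r : ℝ) {I : Set ℝ} (hI : MeasurableSet I) :
    MeasurableSet {z : ℂ | ‖z‖ < r ∧ Complex.arg z ∈ I} :=
  (isOpen_lt continuous_norm continuous_const).measurableSet.inter (Complex.measurable_arg hI)

theorem Complex.volume_setOf_norm_lt_arg_mem {r : ℝ} (hr : 0 ≤ r) {I : Set ℝ}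
    (hI : MeasurableSet I) :
    volume {z : ℂ | ‖z‖ < r ∧ Complex.arg z ∈ I}
      = ENNReal.ofReal (r ^ 2 / 2) * volume (I ∩ Ioo (-π) π) := by
  set S := {z : ℂ | ‖z‖ < r ∧ Complex.arg z ∈ I}
  have hpolar : EqOn
      (fun p : ℝ × ℝ => ENNReal.ofReal p.1 • S.indicator 1 (Complex.polarCoord.symm p))
      ((Ioo 0 r ×ˢ I).indicator fun p => ENNReal.ofReal p.1) polarCoord.target := by
    rintro ⟨ρ, θ⟩ ⟨hρ, hθ⟩
    have hnorm : ‖Complex.polarCoord.symm (ρ, θ)‖ = ρ := by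
      rw [Complex.norm_polarCoord_symm, abs_of_pos hρ]
    have harg : Complex.arg (Complex.polarCoord.symm (ρ, θ)) = θ := by
      rw [Complex.polarCoord_symm_apply, Complex.ofReal_cos, Complex.ofReal_sin]
      exact (Complex.arg_real_mul _ hρ).trans (Complex.arg_cos_add_sin_mul_I ⟨hθ.1, hθ.2.le⟩)
    have hmem : Complex.polarCoord.symm (ρ, θ) ∈ S ↔ (ρ, θ) ∈ Ioo 0 r ×ˢ I := by
      simp only [S, mem_ofPred_eq, hnorm, harg, mem_prod, mem_Ioo, hρ.out, true_and]
    dsimp only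
    by_cases h : (ρ, θ) ∈ Ioo 0 r ×ˢ I
    · rw [indicator_of_mem h, indicator_of_mem (hmem.2 h), Pi.one_apply, smul_eq_mul, mul_one]
    · rw [indicator_of_notMem h, indicator_of_notMem (mt hmem.1 h), smul_zero]
  have htarget : Ioo 0 r ×ˢ I ∩ polarCoord.target = Ioo 0 r ×ˢ (I ∩ Ioo (-π) π) := by
    rw [polarCoord_target, prod_inter_prod, Ioo_inter_Ioi, max_self]
  have hradial : ∫⁻ ρ in Ioo 0 r, ENNReal.ofReal ρ = ENNReal.ofReal (r ^ 2 / 2) := by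
    rw [← ofReal_integral_eq_lintegral_ofReal, integral_Ioc_eq_integral_Ioo.symm,
      ← intervalIntegral.integral_of_le hr, integral_id, zero_pow two_ne_zero, sub_zero]
    · exact intervalIntegral.intervalIntegrable_id.1.mono_set Ioo_subset_Ioc_self
    · exact (ae_restrict_mem measurableSet_Ioo).mono fun ρ hρ => hρ.1.le
  have hbox : MeasurableSet (Ioo 0 r ×ˢ I) := measurableSet_Ioo.prod hI
  rw [← lintegral_indicator_one (Complex.measurableSet_setOf_norm_lt_arg_mem r hI),
    ← Complex.lintegral_comp_polarCoord_symm,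
    setLIntegral_congr_fun polarCoord.open_target.measurableSet hpolar,
    lintegral_indicator hbox, Measure.restrict_restrict hbox, htarget, Measure.volume_eq_prod,
    ← Measure.prod_restrict]
  simpa [hradial] using lintegral_prod_mul (μ := volume.restrict (Ioo 0 r))
    (ν := volume.restrict (I ∩ Ioo (-π) π)) (f := ENNReal.ofReal) (g := 1)
    (by fun_prop) (by fun_prop)

theorem sector_eq_preimage (α : ℝ) (x : ℂ) (y r c : ℝ) :
    sector α x y r = (fun z => (Circle.exp c : ℂ) * (z - x)) ⁻¹' sector α 0 (y + c) r := by
  have hrot : ∀ (w : ℂ) (θ : ℝ), w = ‖w‖ * Complex.exp (θ * Complex.I) ↔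
      Circle.exp c * w = ‖w‖ * Complex.exp (↑(θ + c) * Complex.I) := by
    intro w θ
    rw [Circle.coe_exp, Complex.ofReal_add, add_mul, Complex.exp_add,
      show (‖w‖ : ℂ) * (Complex.exp (θ * Complex.I) * Complex.exp (c * Complex.I))
        = Complex.exp (c * Complex.I) * (‖w‖ * Complex.exp (θ * Complex.I)) by ring]
    exact (mul_right_inj' (Complex.exp_ne_zero _)).symm
  ext z
  simp only [sector, mem_preimage, mem_ofPred_eq, sub_zero, dist_eq_norm, norm_mul,
    Circle.norm_coe, one_mul]
  refine and_congr_right fun _ => ⟨fun ⟨θ, hθ, hz⟩ => ⟨θ + c, ?_, (hrot _ θ).1 hz⟩,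
    fun ⟨θ, hθ, hz⟩ => ⟨θ - c, ?_, (hrot _ (θ - c)).2 (by rwa [sub_add_cancel])⟩⟩
  · exact ⟨by linarith [hθ.1], by linarith [hθ.2]⟩
  · exact ⟨by linarith [hθ.1], by linarith [hθ.2]⟩

theorem sector_zero_neg_half_eq {α : ℝ} (hα : α ≤ 2 * π) (r : ℝ) :
    sector α 0 (-(α / 2)) r
      = {z : ℂ | ‖z‖ < r ∧ Complex.arg z ∈ Icc (-(α / 2)) (α / 2)} := by
  ext z
  simp only [sector, mem_ofPred_eq, sub_zero, dist_zero_right]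
  refine and_congr_right fun _ => ⟨?_, fun h =>
    ⟨z.arg, ⟨h.1, by linarith [h.2]⟩, (Complex.norm_mul_exp_arg_mul_I z).symm⟩⟩
  rintro ⟨θ, hθ, hz⟩
  rcases eq_or_ne z 0 with rfl | hz0
  · rw [Complex.arg_zero]
    exact ⟨by linarith [hθ.1, hθ.2], by linarith [hθ.1, hθ.2]⟩
  rw [hz, Complex.arg_real_mul _ (norm_pos_iff.2 hz0), Complex.arg_exp_mul_I]
  rcases (show -π ≤ θ by linarith [hθ.1]).eq_or_lt with rfl | hθπ
  -- `θ = -π` forces `α = 2π`, and then `arg` wraps `-π` around to `π`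
  · rw [toIocMod_apply_left]
    exact ⟨by linarith [pi_pos, hθ.1], by linarith [hθ.1]⟩
  · rw [(toIocMod_eq_self _).2 ⟨hθπ, by linarith [hθ.2]⟩]
    exact ⟨hθ.1, by linarith [hθ.2]⟩

theorem measurePreserving_circle_mul_sub (u : Circle) (x : ℂ) :
    MeasurePreserving (fun z : ℂ => (u : ℂ) * (z - x)) :=
  (rotation u).measurePreserving.comp (measurePreserving_sub_right volume x)

theorem volume_Icc_inter_Ioo_neg_pi_pi {α : ℝ} (hα : α ≤ 2 * π) :
    volume (Icc (-(α / 2)) (α / 2) ∩ Ioo (-π) π) = ENNReal.ofReal α := by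
  have hIoo : Ioo (-(α / 2)) (α / 2) ⊆ Icc (-(α / 2)) (α / 2) ∩ Ioo (-π) π :=
    subset_inter Ioo_subset_Icc_self (Ioo_subset_Ioo (by linarith) (by linarith))
  refine le_antisymm ((measure_mono inter_subset_left).trans_eq ?_)
    ((Eq.trans_le ?_ (measure_mono hIoo)))
  · rw [Real.volume_Icc]; ring_nf
  · rw [Real.volume_Ioo]; ring_nf

theorem volume_sector {α : ℝ} (hα : α ≤ 2 * π) (x : ℂ) (y : ℝ) {r : ℝ}
    (hr : 0 ≤ r) : volume (sector α x y r) = ENNReal.ofReal (α / 2 * r ^ 2) := by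
  rw [sector_eq_preimage α x y r (-(y + α / 2)), show y + -(y + α / 2) = -(α / 2) by ring,
    sector_zero_neg_half_eq hα, (measurePreserving_circle_mul_sub _ x).measure_preimage
      (Complex.measurableSet_setOf_norm_lt_arg_mem r measurableSet_Icc).nullMeasurableSet,
    Complex.volume_setOf_norm_lt_arg_mem hr measurableSet_Icc,
    volume_Icc_inter_Ioo_neg_pi_pi hα, ← ENNReal.ofReal_mul (by positivity)]
  ring_nf

theorem abs_setIntegral_sub_measureReal_mul_le {X : Type*} [PseudoMetricSpace X]
    [MeasurableSpace X] {μ : Measure X} {f : X → ℝ} {S : Set X} {x : X} {K r : ℝ}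
    (hS : S ⊆ Metric.ball x r) (hμS : μ S ≠ ⊤) (hf : IntegrableOn f S μ)
    (hlip : ∀ z ∈ S, |f z - f x| ≤ K * dist z x) :
    |(∫ z in S, f z ∂μ) - μ.real S * f x| ≤ |K| * r * μ.real S := by
  have hbound : ∀ z ∈ S, ‖f z - f x‖ ≤ |K| * r := fun z hz =>
    calc |f z - f x| ≤ K * dist z x := hlip z hz
      _ ≤ |K| * dist z x := mul_le_mul_of_nonneg_right (le_abs_self K) dist_nonneg
      _ ≤ |K| * r := mul_le_mul_of_nonneg_left (hS hz).le (abs_nonneg K)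
  rw [← smul_eq_mul (μ.real S), ← setIntegral_const,
    ← integral_sub hf (integrableOn_const hμS)]
  exact norm_setIntegral_le_of_norm_le_const hμS.lt_top hbound

theorem bddAbove_range_abs_mul_setIntegral_sub {X ι : Type*} [MeasurableSpace X]
    {μ : Measure X} {f : X → ℝ} (hf : Integrable f μ) (S : ι → Set X) (m c : ℝ) :
    BddAbove (range fun i => |m * (∫ z in S i, f z ∂μ) - c|) := by
  refine ⟨|m| * ∫ z, |f z| ∂μ + |c|, forall_mem_range.2 fun i => ?_⟩
  have hS : |∫ z in S i, f z ∂μ| ≤ ∫ z, |f z| ∂μ :=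
    (abs_integral_le_integral_abs).trans
      (setIntegral_le_integral hf.abs (Eventually.of_forall fun z => abs_nonneg (f z)))
  calc |m * (∫ z in S i, f z ∂μ) - c| ≤ |m| * |∫ z in S i, f z ∂μ| + |c| := by
        rw [← abs_mul]; exact abs_sub _ _
    _ ≤ |m| * ∫ z, |f z| ∂μ + |c| := by gcongr

theorem eventually_pos_of_tendsto_div_one {ι : Type*} {l : Filter ι} {k c : ι → ℝ}
    (hk : ∀ᶠ n in l, 0 < k n) (hc : Tendsto (fun n => c n / k n) l (𝓝 1)) :
    ∀ᶠ n in l, 0 < c n := by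
  filter_upwards [hk, hc.eventually (lt_mem_nhds one_pos)] with n hkn hcn
  exact (div_pos_iff_of_pos_right hkn).1 hcn

theorem tendsto_add_mul_sqrt_div_self {ι : Type*} {l : Filter ι} {k : ι → ℝ}
    (hk : Tendsto k l atTop) (t : ℝ) :
    Tendsto (fun n => (k n + t * √(k n)) / k n) l (𝓝 1) := by
  have hlim : Tendsto (fun n => 1 + t / √(k n)) l (𝓝 (1 + 0)) :=
    tendsto_const_nhds.add (tendsto_const_nhds.div_atTop (tendsto_sqrt_atTop.comp hk))
  rw [add_zero] at hlim
  refine hlim.congr' ?_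
  filter_upwards [hk.eventually_gt_atTop 0] with n hn
  have hsq : √(k n) * √(k n) = k n := mul_self_sqrt hn.le
  have : 0 < √(k n) := sqrt_pos.2 hn
  field_simp
  linear_combination -t * hsq

section RadiusSequence

variable {k c : ℕ → ℝ} (hk : ∀ᶠ n in atTop, 0 < k n)
  (hc : Tendsto (fun n => c n / k n) atTop (𝓝 1))
  (hko : Tendsto (fun n => k n / √n) atTop (𝓝 0))
include hk hc hko

theorem tendsto_sqrt_mul_div_natCast (s : ℝ) :
    Tendsto (fun n : ℕ => √(s * c n / n)) atTop (𝓝 0) := by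
  have hinv : Tendsto (fun n : ℕ => (√n)⁻¹) atTop (𝓝 0) :=
    tendsto_inv_atTop_zero.comp (tendsto_sqrt_atTop.comp tendsto_natCast_atTop_atTop)
  have hlim := (((hc.const_mul s).mul hko).mul hinv).sqrt
  simp only [mul_one, mul_zero, sqrt_zero] at hlim
  refine hlim.congr' ?_
  filter_upwards [hk, eventually_gt_atTop 0] with n hkn hn
  have : 0 < √(n : ℝ) := sqrt_pos.2 (Nat.cast_pos.2 hn)
  congr 1
  field_simp
  rw [sq_sqrt n.cast_nonneg]

theorem tendsto_mul_sqrt_mul_div_natCast_div_sqrt (s : ℝ) :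
    Tendsto (fun n : ℕ => c n * √(s * c n / n) / √(k n)) atTop (𝓝 0) := by
  have hlim := (((hc.pow 3).const_mul s).mul (hko.pow 2)).sqrt
  simp only [one_pow, mul_one, ne_eq, OfNat.ofNat_ne_zero, not_false_eq_true, zero_pow,
    mul_zero, sqrt_zero] at hlim
  refine hlim.congr' ?_
  filter_upwards [hk, eventually_pos_of_tendsto_div_one hk hc, eventually_gt_atTop 0]
    with n hkn hcn hn
  have hsq : √(n : ℝ) ^ 2 = n := sq_sqrt n.cast_nonneg
  have : 0 < √(n : ℝ) := sqrt_pos.2 (Nat.cast_pos.2 hn)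
  -- `c √(s c / n) / √k = √(s (c / k)³ (k / √n)²)`
  rw [show c n * √(s * c n / n) = √(c n ^ 2 * (s * c n / n)) by
    rw [sqrt_mul (sq_nonneg _), sqrt_sq hcn.le], ← sqrt_div' _ hkn.le]
  congr 1
  field_simp
  rw [hsq]

end RadiusSequence

theorem abs_mul_setIntegral_sector_sub_le {α s c m r K : ℝ} (hα₀ : 0 < α)
    (hα : α ≤ 2 * π) {f : ℂ → ℝ} {x : ℂ} (hLs : s * f x = 2 / α) (hm : 0 ≤ m) (hr : 0 ≤ r)
    (hmr : m * r ^ 2 = s * c) (hf : IntegrableOn f (Metric.ball x r))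
    (hlip : ∀ z, dist z x < r → |f z - f x| ≤ K * dist z x) (y : ℝ) :
    |m * (∫ z in sector α x y r, f z) - c| ≤ |K| * (α / 2) * s * (c * r) := by
  have hsub : sector α x y r ⊆ Metric.ball x r := fun z hz => hz.1
  have hfin : volume (sector α x y r) ≠ ⊤ := by
    rw [volume_sector hα x y hr]; exact ENNReal.ofReal_ne_top
  have hvol : volume.real (sector α x y r) = α / 2 * r ^ 2 := by
    rw [measureReal_def, volume_sector hα x y hr, ENNReal.toReal_ofReal (by positivity)]
  have hfx : α / 2 * (s * f x) = 1 := by rw [hLs]; field_simp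
  have hc : c = m * (volume.real (sector α x y r) * f x) := by
    rw [hvol]; linear_combination (-(α / 2 * f x)) * hmr - c * hfx
  have hest := abs_setIntegral_sub_measureReal_mul_le hsub hfin (hf.mono_set hsub)
    fun z hz => hlip z hz.1
  calc |m * (∫ z in sector α x y r, f z) - c|
      = m * |(∫ z in sector α x y r, f z) - volume.real (sector α x y r) * f x| := by
        rw [hc, ← mul_sub, abs_mul, abs_of_nonneg hm]
    _ ≤ m * (|K| * r * volume.real (sector α x y r)) := by gcongr
    _ = |K| * (α / 2) * s * (c * r) := by
        rw [hvol]; linear_combination (|K| * (α / 2) * r) * hmr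

theorem sector_measure_on_level_set_general (α s t : ℝ) (hα : α ∈ Set.Ioc 0 (2 * π)) (hs : 0 < s)
    (f : ℂ → ℝ) (hint : Integrable f)
    (x : ℂ) (K : ℝ)
    (hlip : ∀ᶠ z in nhds x, |f z - f x| ≤ K * dist z x)
    (hLs : s * f x = 2 / α)
    (k : ℕ → ℝ)
    (hk : Tendsto k atTop atTop)
    (hko : Tendsto (fun n => k n / Real.sqrt n) atTop (nhds 0)) :
    ∃ e : ℕ → ℝ,
      Tendsto (fun n => e n / Real.sqrt (k n)) atTop (nhds 0) ∧
      ∀ n : ℕ, ∀ y : ℝ,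
        |(n : ℝ) *
            (∫ z in sector α x y (Real.sqrt (s * (k n + t * Real.sqrt (k n)) / n)), f z) -
          (k n + t * Real.sqrt (k n))| ≤ e n := by
  set c : ℕ → ℝ := fun n => k n + t * √(k n)
  set R : ℕ → ℝ := fun n => √(s * c n / n)
  have hk₀ : ∀ᶠ n in atTop, 0 < k n := hk.eventually_gt_atTop 0
  have hck : Tendsto (fun n => c n / k n) atTop (𝓝 1) := tendsto_add_mul_sqrt_div_self hk t
  obtain ⟨δ, hδ, hlipδ⟩ := Metric.eventually_nhds_iff.1 hlip
  have hbound : ∀ᶠ n : ℕ in atTop, ∀ y,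
      |n * (∫ z in sector α x y (R n), f z) - c n| ≤ |K| * (α / 2) * s * (c n * R n) := by
    filter_upwards [eventually_pos_of_tendsto_div_one hk₀ hck, eventually_ne_atTop 0,
      (tendsto_sqrt_mul_div_natCast hk₀ hck hko s).eventually (gt_mem_nhds hδ)]
      with n hcn hn hRδ y
    have hnR : (n : ℝ) * R n ^ 2 = s * c n := by
      rw [sq_sqrt (by positivity)]; field_simp
    exact abs_mul_setIntegral_sector_sub_le hα.1 hα.2 hLs n.cast_nonneg (sqrt_nonneg _) hnR
      hint.integrableOn (fun z hz => hlipδ (hz.trans hRδ)) y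
  refine ⟨fun n => ⨆ y, |n * (∫ z in sector α x y (R n), f z) - c n|, ?_,
    fun n y => le_ciSup
      (bddAbove_range_abs_mul_setIntegral_sub hint (fun y => sector α x y (R n)) n (c n)) y⟩
  have hlim := (tendsto_mul_sqrt_mul_div_natCast_div_sqrt hk₀ hck hko s).const_mul
    (|K| * (α / 2) * s)
  rw [mul_zero] at hlim
  refine squeeze_zero' (Eventually.of_forall fun n =>
    div_nonneg (Real.iSup_nonneg fun y => abs_nonneg _) (sqrt_nonneg _)) ?_ hlim
  filter_upwards [hbound] with n hn
  rw [← mul_div_assoc]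
  exact div_le_div_of_nonneg_right (ciSup_le hn) (sqrt_nonneg _)

/-- Fix `x` at which the density `f` is positive and locally Lipschitz,
with `n r_n² = s(k_n + t√k_n)`, `k_n → ∞`, `k_n/√n → 0`. If `s f(x) = 2/α` (i.e. `x` lies
on the level set `L_s`), then `n F(S(x,y,r_n)) = k_n + t√k_n + o(√k_n)`, uniformly in the
inclination `y`. -/
theorem sector_measure_on_level_set (α s t : ℝ) (hα : α ∈ Set.Ioc 0 (2 * π)) (hs : 0 < s)
    (f : ℂ → ℝ) (hmeas : Measurable f) (hnonneg : ∀ z, 0 ≤ f z) (hint : Integrable f)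
    (x : ℂ) (hfx : 0 < f x) (K : ℝ)
    (hlip : ∀ᶠ z in nhds x, |f z - f x| ≤ K * dist z x)
    (hLs : s * f x = 2 / α)
    (k : ℕ → ℝ) (hkpos : ∀ n, 0 < k n)
    (hk : Tendsto k atTop atTop)
    (hko : Tendsto (fun n => k n / Real.sqrt n) atTop (nhds 0)) :
    ∃ e : ℕ → ℝ,
      Tendsto (fun n => e n / Real.sqrt (k n)) atTop (nhds 0) ∧
      ∀ n : ℕ, ∀ y : ℝ,
        |(n : ℝ) *
            (∫ z in sector α x y (Real.sqrt (s * (k n + t * Real.sqrt (k n)) / n)), f z) -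
          (k n + t * Real.sqrt (k n))| ≤ e n :=
  sector_measure_on_level_set_general α s t hα hs f hint x K hlip hLs k hk hko
end
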